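/- Under the positivity and Markov assumptions of the chi-squared theorem, the likelihood-ratio statistic equals 2n times the plug-in estimator: Δ_n = 2 [ max_{θ∈Θ} L_n(θ) − max_{φ∈Φ} L_n(h(φ)) ] = 2n Î_n^{(k)}(X→Y‖Z). -/

import Mathlib

open MeasureTheory Real Filter Topology

namespace CCDI

variable {Ω : Type*} [MeasurableSpace Ω]

/-- The probability of an event as a real number. -/
noncomputable def pr (μ : Measure Ω) (s : Set Ω) : ℝ := (μ s).toReal

/-- Shannon entropy (natural log) of a finite-valued random variable. -/
noncomputable def entH {S : Type*} [Fintype S] (μ : Measure Ω) (X : Ω → S) : ℝ :=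
  -∑ s : S, pr μ (X ⁻¹' {s}) * Real.log (pr μ (X ⁻¹' {s}))

/-- Conditional Shannon entropy `H(X | Y) = H(X, Y) - H(Y)`. -/
noncomputable def condH {S T : Type*} [Fintype S] [Fintype T]
    (μ : Measure Ω) (X : Ω → S) (Y : Ω → T) : ℝ :=
  entH μ (fun ω => (X ω, Y ω)) - entH μ Y

/-- Conditional mutual information `I(X ; Y | Z) = H(X|Z) + H(Y|Z) - H(X,Y|Z)`. -/
noncomputable def cmi {S T U : Type*} [Fintype S] [Fintype T] [Fintype U]
    (μ : Measure Ω) (X : Ω → S) (Y : Ω → T) (Z : Ω → U) : ℝ :=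
  condH μ X Z + condH μ Y Z - condH μ (fun ω => (X ω, Y ω)) Z

/-- `X` and `Y` are conditionally independent given `Z`. -/
def CondIndep {S T U : Type*} (μ : Measure Ω) (X : Ω → S) (Y : Ω → T) (Z : Ω → U) : Prop :=
  ∀ (x : S) (y : T) (z : U),
    pr μ (X ⁻¹' {x} ∩ Y ⁻¹' {y} ∩ Z ⁻¹' {z}) * pr μ (Z ⁻¹' {z}) =
      pr μ (X ⁻¹' {x} ∩ Z ⁻¹' {z}) * pr μ (Y ⁻¹' {y} ∩ Z ⁻¹' {z})

/-- The block `X_1^m` of a process indexed by positive times. -/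
def blk1 {S : Type*} (X : ℕ → Ω → S) (m : ℕ) : Ω → Fin m → S :=
  fun ω j => X ((j : ℕ) + 1) ω

/-- The block `X_a^{a+m-1}` of a two-sided process. -/
def blkZ {S : Type*} (X : ℤ → Ω → S) (a : ℤ) (m : ℕ) : Ω → Fin m → S :=
  fun ω j => X (a + (j : ℕ)) ω

/-- Directed information `I(X_1^n → Y_1^n) = ∑_{i=1}^n I(X_1^i ; Y_i | Y_1^{i-1})`. -/
noncomputable def DI {A B : Type*} [Fintype A] [Fintype B]
    (μ : Measure Ω) (X : ℕ → Ω → A) (Y : ℕ → Ω → B) (n : ℕ) : ℝ :=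
  ∑ i ∈ Finset.range n, cmi μ (blk1 X (i + 1)) (Y (i + 1)) (blk1 Y i)

/-- Causal conditional directed information
`I(X_1^n → Y_1^n ‖ Z_1^n) = ∑_{i=1}^n I(X_1^i ; Y_i | Y_1^{i-1}, Z_1^i)`. -/
noncomputable def ccdi1 {A B C : Type*} [Fintype A] [Fintype B] [Fintype C]
    (μ : Measure Ω) (X : ℕ → Ω → A) (Y : ℕ → Ω → B) (Z : ℕ → Ω → C) (n : ℕ) : ℝ :=
  ∑ i ∈ Finset.range n,
    cmi μ (blk1 X (i + 1)) (Y (i + 1)) (fun ω => (blk1 Y i ω, blk1 Z (i + 1) ω))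

/-- CCDI for a two-sided process, over times `1,…,n`. -/
noncomputable def ccdiZ {A B C : Type*} [Fintype A] [Fintype B] [Fintype C]
    (μ : Measure Ω) (X : ℤ → Ω → A) (Y : ℤ → Ω → B) (Z : ℤ → Ω → C) (n : ℕ) : ℝ :=
  ∑ i ∈ Finset.range n,
    cmi μ (blkZ X 1 (i + 1)) (Y ((i : ℤ) + 1)) (fun ω => (blkZ Y 1 i ω, blkZ Z 1 (i + 1) ω))

/-- Stationarity of a (two-sided) process: the law of every finite window is
translation-invariant. -/
def Stationary {S : Type*} (μ : Measure Ω) (W : ℤ → Ω → S) : Prop :=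
  ∀ (m : ℕ) (t : ℤ) (w : Fin m → S),
    pr μ {ω | ∀ j : Fin m, W (t + (j : ℕ)) ω = w j} =
      pr μ {ω | ∀ j : Fin m, W ((j : ℕ) : ℤ) ω = w j}

/-- The process `W` is a Markov chain of order at most `k`: `W_n` is conditionally
independent of any block of the past before time `n-k`, given `W_{n-k}^{n-1}`. -/
def MarkovOrder {S : Type*} (μ : Measure Ω) (W : ℤ → Ω → S) (k : ℕ) : Prop :=
  ∀ (n : ℤ) (m : ℕ),
    CondIndep μ (W n) (fun ω (j : Fin m) => W (n - (k : ℤ) - (m : ℤ) + (j : ℕ)) ω)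
      (fun ω (j : Fin k) => W (n - (k : ℤ) + (j : ℕ)) ω)

/-- The empirical (uniform) measure on sample indices `{0,…,n-1}`. -/
noncomputable def empμ (n : ℕ) : Measure (Fin n) := ((n : ENNReal))⁻¹ • Measure.count

/-- The plug-in estimator `Î_n^{(k)}(X → Y ‖ Z)` computed from a sample path:
the conditional mutual information `I(Y_0 ; X_{-k}^0 | Y_{-k}^{-1}, Z_{-k}^0)` under the
empirical distribution of the overlapping `(k+1)`-blocks at times `1,…,n`. -/
noncomputable def plugIn {A B C : Type*} [Fintype A] [Fintype B] [Fintype C]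
    (k n : ℕ) (x : ℤ → A) (y : ℤ → B) (z : ℤ → C) : ℝ :=
  cmi (empμ n) (fun i : Fin n => y ((i : ℤ) + 1))
    (fun (i : Fin n) (j : Fin (k + 1)) => x ((i : ℤ) + 1 - (k : ℤ) + (j : ℕ)))
    (fun i : Fin n =>
      ((fun j : Fin k => y ((i : ℤ) + 1 - (k : ℤ) + (j : ℕ))),
       (fun j : Fin (k + 1) => z ((i : ℤ) + 1 - (k : ℤ) + (j : ℕ)))))

/-- The plug-in estimator evaluated on the sample path of the processes at `ω`. -/
noncomputable def plugInP {A B C : Type*} [Fintype A] [Fintype B] [Fintype C]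
    (k n : ℕ) (X : ℤ → Ω → A) (Y : ℤ → Ω → B) (Z : ℤ → Ω → C) (ω : Ω) : ℝ :=
  plugIn k n (fun t => X t ω) (fun t => Y t ω) (fun t => Z t ω)

/-- The probability mass function of `f` under `μ`. -/
noncomputable def pmfOf {S : Type*} (μ : Measure Ω) (f : Ω → S) : S → ℝ :=
  fun s => pr μ (f ⁻¹' {s})

/-- Relative entropy (KL divergence) between two pmfs on a finite set. -/
noncomputable def Dkl {S : Type*} [Fintype S] (P Q : S → ℝ) : ℝ :=
  ∑ s : S, P s * Real.log (P s / Q s)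

/-- Shannon entropy of a pmf on a finite set. -/
noncomputable def entP {S : Type*} [Fintype S] (P : S → ℝ) : ℝ :=
  -∑ s : S, P s * Real.log (P s)

/-- The process `W` is time-homogeneous with `k`-th order transition function `Q`. -/
def HomMarkov {S : Type*} (μ : Measure Ω) (W : ℤ → Ω → S) (k : ℕ)
    (Q : (Fin k → S) → S → ℝ) : Prop :=
  ∀ (n : ℤ) (w : Fin k → S) (s : S),
    pr μ ({ω | ∀ j : Fin k, W (n - (k : ℤ) + (j : ℕ)) ω = w j} ∩ {ω | W n ω = s}) =
      Q w s * pr μ {ω | ∀ j : Fin k, W (n - (k : ℤ) + (j : ℕ)) ω = w j}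

open scoped Classical in
/-- The transition matrix of the lifted (first order) chain of `k`-blocks induced by a
`k`-th order transition function `Q`. -/
noncomputable def Qlift {S : Type*} (k : ℕ) (Q : (Fin k → S) → S → ℝ) :
    Matrix (Fin k → S) (Fin k → S) ℝ :=
  fun u v =>
    if h : (∀ (i : Fin k) (hi : (i : ℕ) + 1 < k), v i = u ⟨(i : ℕ) + 1, hi⟩) ∧ 0 < k then
      Q u (v ⟨k - 1, Nat.sub_lt h.2 Nat.one_pos⟩)
    else 0

/-- Irreducibility and aperiodicity of a `k`-th order transition function, expressed as
primitivity of the lifted block-transition matrix. -/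
def Primitive {S : Type*} [Fintype S] [DecidableEq S] (k : ℕ)
    (Q : (Fin k → S) → S → ℝ) : Prop :=
  ∃ N : ℕ, ∀ u v : Fin k → S, 0 < (Qlift k Q ^ N) u v


variable {A B C : Type*}

/-- The sample value of the full `(k+1)`-block `(X_{i+1-k}^{i+1}, Y_{i+1-k}^{i+1}, Z_{i+1-k}^{i+1})`. -/
def fullVal (k : ℕ) (x : ℤ → A) (y : ℤ → B) (z : ℤ → C) (i : ℕ) :
    (Fin (k + 1) → A) × (Fin (k + 1) → B) × (Fin (k + 1) → C) :=
  ((fun j => x ((i : ℤ) + 1 - (k : ℤ) + (j : ℕ))),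
   (fun j => y ((i : ℤ) + 1 - (k : ℤ) + (j : ℕ))),
   (fun j => z ((i : ℤ) + 1 - (k : ℤ) + (j : ℕ))))

/-- The sample value of the block `(Y_{i+1-k}^{i}, Z_{i+1-k}^{i+1})` (past of `Y`, full `Z`). -/
def pzVal (k : ℕ) (y : ℤ → B) (z : ℤ → C) (i : ℕ) :
    (Fin k → B) × (Fin (k + 1) → C) :=
  ((fun j => y ((i : ℤ) + 1 - (k : ℤ) + (j : ℕ))),
   (fun j => z ((i : ℤ) + 1 - (k : ℤ) + (j : ℕ))))

/-- The sample value of the block `(Y_{i+1-k}^{i+1}, Z_{i+1-k}^{i+1})`. -/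
def yzVal (k : ℕ) (y : ℤ → B) (z : ℤ → C) (i : ℕ) :
    (Fin (k + 1) → B) × (Fin (k + 1) → C) :=
  ((fun j => y ((i : ℤ) + 1 - (k : ℤ) + (j : ℕ))),
   (fun j => z ((i : ℤ) + 1 - (k : ℤ) + (j : ℕ))))

/-- The sample value of the block `(X_{i+1-k}^{i+1}, Y_{i+1-k}^{i}, Z_{i+1-k}^{i+1})`. -/
def xpzVal (k : ℕ) (x : ℤ → A) (y : ℤ → B) (z : ℤ → C) (i : ℕ) :
    (Fin (k + 1) → A) × (Fin k → B) × (Fin (k + 1) → C) :=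
  ((fun j => x ((i : ℤ) + 1 - (k : ℤ) + (j : ℕ))),
   (fun j => y ((i : ℤ) + 1 - (k : ℤ) + (j : ℕ))),
   (fun j => z ((i : ℤ) + 1 - (k : ℤ) + (j : ℕ))))

/-- The sample value of the conditioning window `(X_{i+1-k}^{i}, Y_{i+1-k}^{i}, Z_{i+1-k}^{i})`. -/
def winVal (k : ℕ) (x : ℤ → A) (y : ℤ → B) (z : ℤ → C) (i : ℕ) :
    (Fin k → A) × (Fin k → B) × (Fin k → C) :=
  ((fun j => x ((i : ℤ) + 1 - (k : ℤ) + (j : ℕ))),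
   (fun j => y ((i : ℤ) + 1 - (k : ℤ) + (j : ℕ))),
   (fun j => z ((i : ℤ) + 1 - (k : ℤ) + (j : ℕ))))

/-- The sample value of the current symbol `(X_{i+1}, Y_{i+1}, Z_{i+1})`. -/
def ptVal (x : ℤ → A) (y : ℤ → B) (z : ℤ → C) (i : ℕ) : A × B × C :=
  (x ((i : ℤ) + 1), y ((i : ℤ) + 1), z ((i : ℤ) + 1))

/-- The stationary full `(k+1)`-block `(X_{-k}^0, Y_{-k}^0, Z_{-k}^0)` as a random variable. -/
def statFullMap {Ω : Type*} (X : ℤ → Ω → A) (Y : ℤ → Ω → B) (Z : ℤ → Ω → C) (k : ℕ) :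
    Ω → (Fin (k + 1) → A) × (Fin (k + 1) → B) × (Fin (k + 1) → C) :=
  fun ω => (blkZ X (-(k : ℤ)) (k + 1) ω, blkZ Y (-(k : ℤ)) (k + 1) ω, blkZ Z (-(k : ℤ)) (k + 1) ω)

/-- The stationary block `(Y_{-k}^{-1}, Z_{-k}^0)` as a random variable. -/
def statPZMap {Ω : Type*} (Y : ℤ → Ω → B) (Z : ℤ → Ω → C) (k : ℕ) :
    Ω → (Fin k → B) × (Fin (k + 1) → C) :=
  fun ω => (blkZ Y (-(k : ℤ)) k ω, blkZ Z (-(k : ℤ)) (k + 1) ω)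

/-- The stationary block `(Y_{-k}^0, Z_{-k}^0)` as a random variable. -/
def statYZMap {Ω : Type*} (Y : ℤ → Ω → B) (Z : ℤ → Ω → C) (k : ℕ) :
    Ω → (Fin (k + 1) → B) × (Fin (k + 1) → C) :=
  fun ω => (blkZ Y (-(k : ℤ)) (k + 1) ω, blkZ Z (-(k : ℤ)) (k + 1) ω)

/-- The stationary block `(X_{-k}^0, Y_{-k}^{-1}, Z_{-k}^0)` as a random variable. -/
def statXPZMap {Ω : Type*} (X : ℤ → Ω → A) (Y : ℤ → Ω → B) (Z : ℤ → Ω → C) (k : ℕ) :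
    Ω → (Fin (k + 1) → A) × (Fin k → B) × (Fin (k + 1) → C) :=
  fun ω => (blkZ X (-(k : ℤ)) (k + 1) ω, blkZ Y (-(k : ℤ)) k ω, blkZ Z (-(k : ℤ)) (k + 1) ω)

section Helpers1
variable {T W S : Type*}
lemma pr_empu {n : ℕ} (hn : n ≠ 0) [DecidableEq T] (g : Fin n → T) (t : T) :
    pr (empμ n) (g ⁻¹' {t}) =
      ((Finset.univ.filter fun i => g i = t).card : ℝ) / n := by
  have hfin : (g ⁻¹' {t}).Finite := Set.toFinite _
  have hcount : Measure.count (g ⁻¹' {t}) = (hfin.toFinset.card : ENNReal) :=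
    Measure.count_apply_finite _ hfin
  have hcard : hfin.toFinset = Finset.univ.filter fun i => g i = t := by
    ext i; simp [Set.Finite.mem_toFinset]
  rw [pr, empμ, Measure.smul_apply, smul_eq_mul, hcount, hcard,
    ENNReal.toReal_mul, ENNReal.toReal_inv]
  simp [div_eq_inv_mul]

lemma sum_comp_cnt {n : ℕ} [Fintype T] [DecidableEq T] (g : Fin n → T) (F : T → ℝ) :
    ∑ i : Fin n, F (g i)
      = ∑ t : T, ((Finset.univ.filter fun i => g i = t).card : ℝ) * F t := by
  rw [Finset.sum_comp F g]
  rw [Finset.sum_subset (Finset.subset_univ (Finset.univ.image g))]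
  · simp [nsmul_eq_mul]
  · intro t _ ht
    have : (Finset.univ.filter fun i => g i = t).card = 0 := by
      rw [Finset.card_eq_zero, Finset.filter_eq_empty_iff]
      intro i _
      exact fun h => ht (Finset.mem_image.mpr ⟨i, Finset.mem_univ i, h⟩)
    simp [this]

lemma cnt_total {n : ℕ} [Fintype T] [DecidableEq T] (g : Fin n → T) :
    ∑ t : T, (Finset.univ.filter fun i => g i = t).card = n := by
  rw [← Finset.card_eq_sum_card_fiberwise (fun i _ => Finset.mem_univ (g i))]
  simp

lemma cnt_fst {n : ℕ} [Fintype S] [DecidableEq W] [DecidableEq S]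
    (f : Fin n → W × S) (w : W) :
    (Finset.univ.filter fun i => (f i).1 = w).card
      = ∑ s : S, (Finset.univ.filter fun i => f i = (w, s)).card := by
  rw [Finset.card_eq_sum_card_fiberwise
    (f := fun i => (f i).2) (t := Finset.univ) (fun i _ => Finset.mem_univ _)]
  apply Finset.sum_congr rfl
  intro s _
  rw [Finset.filter_filter]
  congr 1
  apply Finset.filter_congr
  intro i _
  simp [Prod.ext_iff]

lemma entH_empu {n : ℕ} (hn : n ≠ 0) [Fintype T] [DecidableEq T] (g : Fin n → T) :
    ∑ i : Fin n, Real.log (((Finset.univ.filter fun j => g j = g i).card : ℝ) / n)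
      = -((n : ℝ) * entH (empμ n) g) := by
  have hn' : (n : ℝ) ≠ 0 := Nat.cast_ne_zero.mpr hn
  rw [sum_comp_cnt g (fun t => Real.log (((Finset.univ.filter fun j => g j = t).card : ℝ) / n))]
  simp only [entH, pr_empu hn g, mul_neg, neg_neg, Finset.mul_sum]
  apply Finset.sum_congr rfl
  intro t _
  rw [← mul_assoc, mul_comm (n : ℝ), div_mul_cancel₀ _ hn']

end Helpers1
section Helpers2
variable {W S : Type*}

lemma loglik_le {n : ℕ} [Fintype W] [Fintype S] [DecidableEq W] [DecidableEq S]
    (f : Fin n → W × S) (Q : W → S → ℝ) (hpos : ∀ w s, 0 < Q w s)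
    (hsum : ∀ w, ∑ s, Q w s = 1) :
    ∑ i : Fin n, Real.log (Q (f i).1 (f i).2)
      ≤ ∑ i : Fin n, Real.log (((Finset.univ.filter fun j => f j = f i).card : ℝ)
          / ((Finset.univ.filter fun j => (f j).1 = (f i).1).card : ℝ)) := by
  set cnt : W × S → ℝ := fun p => ((Finset.univ.filter fun j => f j = p).card : ℝ) with hcnt
  set cntW : W → ℝ := fun w => ((Finset.univ.filter fun j => (f j).1 = w).card : ℝ) with hcntW
  have hcnt_pos : ∀ i, 0 < cnt (f i) := by
    intro i
    have hm : i ∈ Finset.univ.filter fun j => f j = f i := by simp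
    have h := Finset.card_pos.mpr ⟨i, hm⟩
    simp only [hcnt]; exact_mod_cast h
  have hcntW_pos : ∀ i, 0 < cntW (f i).1 := by
    intro i
    have hm : i ∈ Finset.univ.filter fun j => (f j).1 = (f i).1 := by simp
    have h := Finset.card_pos.mpr ⟨i, hm⟩
    simp only [hcntW]; exact_mod_cast h
  have key : ∑ i : Fin n, Q (f i).1 (f i).2 * cntW (f i).1 / cnt (f i) ≤ (n : ℝ) := by
    rw [sum_comp_cnt f (fun p => Q p.1 p.2 * cntW p.1 / cnt p)]
    have step : ∀ p : W × S, cnt p * (Q p.1 p.2 * cntW p.1 / cnt p) ≤ Q p.1 p.2 * cntW p.1 := by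
      intro p
      rcases eq_or_ne (cnt p) 0 with h | h
      · rw [h, zero_mul]
        have h2 : (0:ℝ) ≤ cntW p.1 := by simp only [hcntW]; positivity
        exact mul_nonneg (hpos _ _).le h2
      · rw [mul_div_cancel₀ _ h]
    calc ∑ p : W × S, cnt p * (Q p.1 p.2 * cntW p.1 / cnt p)
        ≤ ∑ p : W × S, Q p.1 p.2 * cntW p.1 := Finset.sum_le_sum fun p _ => step p
      _ = ∑ w : W, cntW w * ∑ s : S, Q w s := by
          rw [Fintype.sum_prod_type]
          exact Finset.sum_congr rfl fun w _ => by rw [Finset.mul_sum]; exact Finset.sum_congr rfl fun s _ => by ring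
      _ = (n : ℝ) := by
          simp only [hsum, mul_one]
          rw [hcntW]
          norm_cast
          beta_reduce
          exact_mod_cast cnt_total fun i => (f i).1
  have hterm : ∀ i : Fin n,
      Real.log (Q (f i).1 (f i).2) - Real.log (cnt (f i) / cntW (f i).1)
        ≤ Q (f i).1 (f i).2 * cntW (f i).1 / cnt (f i) - 1 := by
    intro i
    have hr : 0 < cnt (f i) / cntW (f i).1 := div_pos (hcnt_pos i) (hcntW_pos i)
    have hq : 0 < Q (f i).1 (f i).2 := hpos _ _
    have hx : (0:ℝ) < Q (f i).1 (f i).2 / (cnt (f i) / cntW (f i).1) := div_pos hq hr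
    have := Real.log_le_sub_one_of_pos hx
    rw [Real.log_div (ne_of_gt hq) (ne_of_gt hr)] at this
    calc Real.log (Q (f i).1 (f i).2) - Real.log (cnt (f i) / cntW (f i).1)
        ≤ Q (f i).1 (f i).2 / (cnt (f i) / cntW (f i).1) - 1 := this
      _ = Q (f i).1 (f i).2 * cntW (f i).1 / cnt (f i) - 1 := by
          rw [div_div_eq_mul_div]
  have : ∑ i : Fin n, (Real.log (Q (f i).1 (f i).2) - Real.log (cnt (f i) / cntW (f i).1)) ≤ 0 := by
    calc ∑ i : Fin n, (Real.log (Q (f i).1 (f i).2) - Real.log (cnt (f i) / cntW (f i).1))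
        ≤ ∑ i : Fin n, (Q (f i).1 (f i).2 * cntW (f i).1 / cnt (f i) - 1) :=
          Finset.sum_le_sum fun i _ => hterm i
      _ = (∑ i : Fin n, Q (f i).1 (f i).2 * cntW (f i).1 / cnt (f i)) - n := by
          rw [Finset.sum_sub_distrib]; simp
      _ ≤ 0 := by linarith
  rw [Finset.sum_sub_distrib] at this
  linarith

lemma loglik_ge {n : ℕ} [Fintype W] [Fintype S] [DecidableEq W] [DecidableEq S] [Nonempty S]
    (f : Fin n → W × S) {t : ℝ} (ht0 : 0 < t) (ht1 : t < 1) :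
    ∃ Q : W → S → ℝ, (∀ w s, 0 < Q w s) ∧ (∀ w, ∑ s, Q w s = 1) ∧
      (n : ℝ) * Real.log t
          + ∑ i : Fin n, Real.log (((Finset.univ.filter fun j => f j = f i).card : ℝ)
              / ((Finset.univ.filter fun j => (f j).1 = (f i).1).card : ℝ))
        ≤ ∑ i : Fin n, Real.log (Q (f i).1 (f i).2) := by
  have hS : (0:ℝ) < (Fintype.card S : ℝ) := by
    exact_mod_cast Fintype.card_pos
  set cnt : W × S → ℝ := fun p => ((Finset.univ.filter fun j => f j = p).card : ℝ) with hcnt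
  set cntW : W → ℝ := fun w => ((Finset.univ.filter fun j => (f j).1 = w).card : ℝ) with hcntW
  refine ⟨fun w s => if cntW w = 0 then (Fintype.card S : ℝ)⁻¹
    else t * cnt (w, s) / cntW w + (1 - t) * (Fintype.card S : ℝ)⁻¹, ?_, ?_, ?_⟩
  · intro w s
    by_cases h : cntW w = 0
    · simp only [h, if_pos rfl, if_true]
      positivity
    · simp only [if_neg h]
      have h1 : 0 ≤ t * cnt (w, s) / cntW w := by
        have : (0:ℝ) ≤ cnt (w, s) := by positivity
        have h2 : (0:ℝ) ≤ cntW w := by positivity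
        positivity
      have h2 : 0 < (1 - t) * (Fintype.card S : ℝ)⁻¹ := by
        have : 0 < 1 - t := by linarith
        positivity
      linarith
  · intro w
    by_cases h : cntW w = 0
    · simp only [if_pos h]
      rw [Finset.sum_const, Finset.card_univ, nsmul_eq_mul]
      field_simp
    · simp only [if_neg h]
      rw [Finset.sum_add_distrib]
      have hsum1 : ∑ s : S, t * cnt (w, s) / cntW w = t := by
        rw [← Finset.sum_div]
        have : ∑ s : S, t * cnt (w, s) = t * cntW w := by
          rw [← Finset.mul_sum]
          congr 1
          simp only [hcntW, hcnt]
          rw [← Nat.cast_sum]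
          norm_cast
          exact (cnt_fst f w).symm
        rw [this, mul_div_assoc, div_self h, mul_one]
      have hsum2 : ∑ _s : S, (1 - t) * (Fintype.card S : ℝ)⁻¹ = 1 - t := by
        rw [Finset.sum_const, Finset.card_univ, nsmul_eq_mul]
        field_simp
      rw [hsum1, hsum2]; ring
  · have hterm : ∀ i : Fin n,
        Real.log t + Real.log (cnt (f i) / cntW (f i).1)
          ≤ Real.log (if cntW (f i).1 = 0 then (Fintype.card S : ℝ)⁻¹
              else t * cnt ((f i).1, (f i).2) / cntW (f i).1 + (1 - t) * (Fintype.card S : ℝ)⁻¹) := by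
      intro i
      have hcnt_pos : 0 < cnt (f i) := by
        have hm : i ∈ Finset.univ.filter fun j => f j = f i := by simp
        have h := Finset.card_pos.mpr ⟨i, hm⟩
        simp only [hcnt]; exact_mod_cast h
      have hcntW_pos : 0 < cntW (f i).1 := by
        have hm : i ∈ Finset.univ.filter fun j => (f j).1 = (f i).1 := by simp
        have h := Finset.card_pos.mpr ⟨i, hm⟩
        simp only [hcntW]; exact_mod_cast h
      rw [if_neg (ne_of_gt hcntW_pos)]
      have hr : 0 < cnt (f i) / cntW (f i).1 := div_pos hcnt_pos hcntW_pos
      have hle : t * (cnt (f i) / cntW (f i).1)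
          ≤ t * cnt ((f i).1, (f i).2) / cntW (f i).1 + (1 - t) * (Fintype.card S : ℝ)⁻¹ := by
        have h1 : 0 ≤ (1 - t) * (Fintype.card S : ℝ)⁻¹ := by
          have : 0 ≤ 1 - t := by linarith
          positivity
        have : t * (cnt (f i) / cntW (f i).1) = t * cnt ((f i).1, (f i).2) / cntW (f i).1 := by
          rw [mul_div_assoc]
        linarith [this.le]
      calc Real.log t + Real.log (cnt (f i) / cntW (f i).1)
          = Real.log (t * (cnt (f i) / cntW (f i).1)) :=
            (Real.log_mul (ne_of_gt ht0) (ne_of_gt hr)).symm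
        _ ≤ _ := Real.log_le_log (by positivity) hle
    calc (n : ℝ) * Real.log t + ∑ i : Fin n, Real.log (cnt (f i) / cntW (f i).1)
        = ∑ i : Fin n, (Real.log t + Real.log (cnt (f i) / cntW (f i).1)) := by
          rw [Finset.sum_add_distrib]; simp [Finset.sum_const, Finset.card_univ, mul_comm]
      _ ≤ _ := Finset.sum_le_sum fun i _ => hterm i

end Helpers2
section Helpers3
variable {W S W1 S1 W2 S2 : Type*}

/-- The value of the empirical log-likelihood optimum. -/
noncomputable def llv {n : ℕ} [DecidableEq W] [DecidableEq S] (f : Fin n → W × S) : ℝ :=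
  ∑ i : Fin n, Real.log (((Finset.univ.filter fun j => f j = f i).card : ℝ)
      / ((Finset.univ.filter fun j => (f j).1 = (f i).1).card : ℝ))

lemma sSup_loglik {n : ℕ} [Fintype W] [Fintype S] [DecidableEq W] [DecidableEq S]
    (hn : 0 < n) (f : Fin n → W × S) :
    sSup {L : ℝ | ∃ Q : W → S → ℝ, (∀ w s, 0 < Q w s) ∧ (∀ w, ∑ s, Q w s = 1) ∧
        L = ∑ i : Fin n, Real.log (Q (f i).1 (f i).2)}
      = llv f := by
  have : Nonempty S := ⟨(f ⟨0, hn⟩).2⟩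
  have hnR : (0:ℝ) < n := by exact_mod_cast hn
  apply csSup_eq_of_forall_le_of_forall_lt_exists_gt
  · obtain ⟨Q, h1, h2, _⟩ := loglik_ge (t := (1:ℝ)/2) f (by norm_num) (by norm_num)
    exact ⟨_, ⟨Q, h1, h2, rfl⟩⟩
  · rintro L ⟨Q, h1, h2, rfl⟩
    exact loglik_le f Q h1 h2
  · intro w hw
    set v := llv f with hv
    have hneg : (w - v) / (2 * n) < 0 := by
      apply div_neg_of_neg_of_pos (by linarith) (by linarith)
    obtain ⟨Q, h1, h2, hge⟩ := loglik_ge (t := Real.exp ((w - v) / (2 * n))) f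
      (Real.exp_pos _) (Real.exp_lt_one_iff.mpr hneg)
    refine ⟨_, ⟨Q, h1, h2, rfl⟩, ?_⟩
    have hlog : (n : ℝ) * Real.log (Real.exp ((w - v) / (2 * n))) = (w - v) / 2 := by
      rw [Real.log_exp]
      field_simp
    rw [hlog] at hge
    have hvv : (∑ i : Fin n, Real.log (((Finset.univ.filter fun j => f j = f i).card : ℝ)
      / ((Finset.univ.filter fun j => (f j).1 = (f i).1).card : ℝ))) = v := rfl
    rw [hvv] at hge
    linarith

lemma sSup_loglik_pair {n : ℕ}
    [Fintype W1] [Fintype S1] [DecidableEq W1] [DecidableEq S1]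
    [Fintype W2] [Fintype S2] [DecidableEq W2] [DecidableEq S2]
    (hn : 0 < n) (f1 : Fin n → W1 × S1) (f2 : Fin n → W2 × S2) :
    sSup {L : ℝ | ∃ (Q1 : W1 → S1 → ℝ) (Q2 : W2 → S2 → ℝ),
        (∀ w s, 0 < Q1 w s) ∧ (∀ w, ∑ s, Q1 w s = 1) ∧
        (∀ w s, 0 < Q2 w s) ∧ (∀ w, ∑ s, Q2 w s = 1) ∧
        L = ∑ i : Fin n, (Real.log (Q1 (f1 i).1 (f1 i).2) + Real.log (Q2 (f2 i).1 (f2 i).2))}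
      = llv f1 + llv f2 := by
  have : Nonempty S1 := ⟨(f1 ⟨0, hn⟩).2⟩
  have : Nonempty S2 := ⟨(f2 ⟨0, hn⟩).2⟩
  have hnR : (0:ℝ) < n := by exact_mod_cast hn
  apply csSup_eq_of_forall_le_of_forall_lt_exists_gt
  · obtain ⟨Q1, h1, h2, _⟩ := loglik_ge (t := (1:ℝ)/2) f1 (by norm_num) (by norm_num)
    obtain ⟨Q2, h3, h4, _⟩ := loglik_ge (t := (1:ℝ)/2) f2 (by norm_num) (by norm_num)
    exact ⟨_, ⟨Q1, Q2, h1, h2, h3, h4, rfl⟩⟩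
  · rintro L ⟨Q1, Q2, h1, h2, h3, h4, rfl⟩
    rw [Finset.sum_add_distrib]
    exact add_le_add (loglik_le f1 Q1 h1 h2) (loglik_le f2 Q2 h3 h4)
  · intro w hw
    set v := llv f1 + llv f2 with hv
    have hneg : (w - v) / (4 * n) < 0 := by
      apply div_neg_of_neg_of_pos (by linarith) (by linarith)
    obtain ⟨Q1, h1, h2, hge1⟩ := loglik_ge (t := Real.exp ((w - v) / (4 * n))) f1
      (Real.exp_pos _) (Real.exp_lt_one_iff.mpr hneg)
    obtain ⟨Q2, h3, h4, hge2⟩ := loglik_ge (t := Real.exp ((w - v) / (4 * n))) f2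
      (Real.exp_pos _) (Real.exp_lt_one_iff.mpr hneg)
    refine ⟨_, ⟨Q1, Q2, h1, h2, h3, h4, rfl⟩, ?_⟩
    have hlog : (n : ℝ) * Real.log (Real.exp ((w - v) / (4 * n))) = (w - v) / 4 := by
      rw [Real.log_exp]
      field_simp
    rw [hlog] at hge1 hge2
    rw [Finset.sum_add_distrib]
    have e1 : llv f1 = ∑ i : Fin n, Real.log (((Finset.univ.filter fun j => f1 j = f1 i).card : ℝ)
      / ((Finset.univ.filter fun j => (f1 j).1 = (f1 i).1).card : ℝ)) := rfl
    have e2 : llv f2 = ∑ i : Fin n, Real.log (((Finset.univ.filter fun j => f2 j = f2 i).card : ℝ)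
      / ((Finset.univ.filter fun j => (f2 j).1 = (f2 i).1).card : ℝ)) := rfl
    rw [← e1] at hge1
    rw [← e2] at hge2
    linarith

/-- The optimal log-likelihood value as a difference of empirical entropies. -/
lemma llv_eq_entropies {n : ℕ} (hn : 0 < n)
    [Fintype W] [Fintype S] [DecidableEq W] [DecidableEq S] (f : Fin n → W × S) :
    llv f = (n : ℝ) * entH (empμ n) (fun i => (f i).1) - (n : ℝ) * entH (empμ n) f := by
  have hn' : n ≠ 0 := Nat.pos_iff_ne_zero.mp hn
  have hnR : (0:ℝ) < n := by exact_mod_cast hn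
  have hterm : ∀ i : Fin n,
      Real.log (((Finset.univ.filter fun j => f j = f i).card : ℝ)
          / ((Finset.univ.filter fun j => (f j).1 = (f i).1).card : ℝ))
        = Real.log (((Finset.univ.filter fun j => f j = f i).card : ℝ) / n)
          - Real.log (((Finset.univ.filter fun j => (f j).1 = (f i).1).card : ℝ) / n) := by
    intro i
    have hma : i ∈ Finset.univ.filter fun j => f j = f i := by simp
    have hmb : i ∈ Finset.univ.filter fun j => (f j).1 = (f i).1 := by simp
    have ha : (0:ℝ) < ((Finset.univ.filter fun j => f j = f i).card : ℝ) := by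
      exact_mod_cast Finset.card_pos.mpr ⟨i, hma⟩
    have hb : (0:ℝ) < ((Finset.univ.filter fun j => (f j).1 = (f i).1).card : ℝ) := by
      exact_mod_cast Finset.card_pos.mpr ⟨i, hmb⟩
    rw [Real.log_div (ne_of_gt ha) (ne_of_gt hb),
      Real.log_div (ne_of_gt ha) (ne_of_gt hnR),
      Real.log_div (ne_of_gt hb) (ne_of_gt hnR)]
    ring
  rw [llv, Finset.sum_congr rfl fun i _ => hterm i, Finset.sum_sub_distrib,
    entH_empu hn' f, entH_empu hn' (fun i => (f i).1)]
  ring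

/-- Entropy is invariant under injective recoding. -/
lemma entH_comp_inj {Ω S T : Type*} [MeasurableSpace Ω] [Fintype S] [Fintype T]
    (μ : MeasureTheory.Measure Ω) (f : Ω → S) (g : S → T) (hg : Function.Injective g) :
    entH μ (fun ω => g (f ω)) = entH μ f := by
  classical
  unfold entH
  congr 1
  have h1 : ∑ t : T, pr μ ((fun ω => g (f ω)) ⁻¹' {t}) * Real.log (pr μ ((fun ω => g (f ω)) ⁻¹' {t}))
      = ∑ t ∈ Finset.univ.image g,
          pr μ ((fun ω => g (f ω)) ⁻¹' {t}) * Real.log (pr μ ((fun ω => g (f ω)) ⁻¹' {t})) := by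
    symm
    apply Finset.sum_subset (Finset.subset_univ _)
    intro t _ ht
    have he : (fun ω => g (f ω)) ⁻¹' {t} = ∅ := by
      ext ω
      simp only [Set.mem_preimage, Set.mem_singleton_iff, Set.mem_empty_iff_false, iff_false]
      intro h
      exact ht (Finset.mem_image.mpr ⟨f ω, Finset.mem_univ _, h⟩)
    rw [he]
    simp [pr]
  rw [h1, Finset.sum_image (fun a _ b _ h => hg h)]
  apply Finset.sum_congr rfl
  intro s _
  have he : (fun ω => g (f ω)) ⁻¹' {g s} = f ⁻¹' {s} := by
    ext ω; simp [hg.eq_iff]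
  rw [he]

/-- Splitting a `(k+1)`-block into its first `k` coordinates and its last one. -/
def splitBlk {α : Type*} (k : ℕ) (a : Fin (k + 1) → α) : (Fin k → α) × α :=
  (fun j => a j.castSucc, a (Fin.last k))

lemma splitBlk_inj {α : Type*} (k : ℕ) : Function.Injective (splitBlk (α := α) k) := by
  intro a b h
  funext j
  induction j using Fin.lastCases with
  | last => exact congrArg Prod.snd h
  | cast i => exact congrFun (congrArg Prod.fst h) i

end Helpers3


/-- Recoding a full `(k+1)`-block triple as (window, current symbol). -/
def gWinPt {A B C : Type*} (k : ℕ) :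
    ((Fin (k + 1) → A) × (Fin (k + 1) → B) × (Fin (k + 1) → C)) →
      ((Fin k → A) × (Fin k → B) × (Fin k → C)) × (A × B × C) :=
  fun p => (((splitBlk k p.1).1, (splitBlk k p.2.1).1, (splitBlk k p.2.2).1),
            ((splitBlk k p.1).2, (splitBlk k p.2.1).2, (splitBlk k p.2.2).2))

lemma gWinPt_inj {A B C : Type*} (k : ℕ) :
    Function.Injective (gWinPt (A := A) (B := B) (C := C) k) := by
  intro p q h
  simp only [gWinPt, Prod.mk.injEq] at h
  obtain ⟨⟨h1, h2, h3⟩, h4, h5, h6⟩ := h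
  exact Prod.ext (splitBlk_inj k (Prod.ext h1 h4))
    (Prod.ext (splitBlk_inj k (Prod.ext h2 h5)) (splitBlk_inj k (Prod.ext h3 h6)))

/-- Recoding an `(x, past-y, z)` block as (window, current `(x, z)` symbol). -/
def gWinXZ {A B C : Type*} (k : ℕ) :
    ((Fin (k + 1) → A) × (Fin k → B) × (Fin (k + 1) → C)) →
      ((Fin k → A) × (Fin k → B) × (Fin k → C)) × (A × C) :=
  fun p => (((splitBlk k p.1).1, p.2.1, (splitBlk k p.2.2).1),
            ((splitBlk k p.1).2, (splitBlk k p.2.2).2))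

lemma gWinXZ_inj {A B C : Type*} (k : ℕ) :
    Function.Injective (gWinXZ (A := A) (B := B) (C := C) k) := by
  intro p q h
  simp only [gWinXZ, Prod.mk.injEq] at h
  obtain ⟨⟨h1, h2, h3⟩, h4, h5⟩ := h
  exact Prod.ext (splitBlk_inj k (Prod.ext h1 h4))
    (Prod.ext h2 (splitBlk_inj k (Prod.ext h3 h5)))

/-- Recoding a full block as `((y0, x-block), (past-y, z-block))`. -/
def gYX {A B C : Type*} (k : ℕ) :
    ((Fin (k + 1) → A) × (Fin (k + 1) → B) × (Fin (k + 1) → C)) →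
      (B × (Fin (k + 1) → A)) × ((Fin k → B) × (Fin (k + 1) → C)) :=
  fun p => (((splitBlk k p.2.1).2, p.1), ((splitBlk k p.2.1).1, p.2.2))

lemma gYX_inj {A B C : Type*} (k : ℕ) :
    Function.Injective (gYX (A := A) (B := B) (C := C) k) := by
  intro p q h
  simp only [gYX, Prod.mk.injEq] at h
  obtain ⟨⟨h1, h2⟩, h3, h4⟩ := h
  exact Prod.ext h2 (Prod.ext (splitBlk_inj k (Prod.ext h3 h1)) h4)


/-- Under the positivity and Markov assumptions of the chi-squared
theorem, the likelihood-ratio statistic equals `2n` times the plug-in estimator: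
`Δ_n = 2 [ sup_{θ∈Θ} L_n(θ) − sup_{φ∈Φ} L_n(h(φ)) ] = 2n Î_n^{(k)}(X→Y‖Z)`, where `Θ` is
the class of all strictly positive `k`-th order transition matrices and `Φ` the null class
of transition matrices factorizing as `Q^{x,z} · Q^y`. -/
theorem likelihood_ratio_eq_plugIn
    {Ω A B C : Type*} [MeasurableSpace Ω]
    [MeasurableSpace A] [MeasurableSpace B] [MeasurableSpace C]
    [Fintype A] [Fintype B] [Fintype C]
    [MeasurableSingletonClass A] [MeasurableSingletonClass B] [MeasurableSingletonClass C]
    [DecidableEq A] [DecidableEq B] [DecidableEq C]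
    (μ : Measure Ω) [IsProbabilityMeasure μ]
    (X : ℤ → Ω → A) (Y : ℤ → Ω → B) (Z : ℤ → Ω → C)
    (k : ℕ) (hk : 1 ≤ k)
    (Q : (Fin k → A × B × C) → A × B × C → ℝ)
    (hM : MarkovOrder μ (fun t ω => (X t ω, Y t ω, Z t ω)) k)
    (hHom : HomMarkov μ (fun t ω => (X t ω, Y t ω, Z t ω)) k Q)
    (hQpos : ∀ w s, 0 < Q w s)
    (hYZ : MarkovOrder μ (fun t ω => (Y t ω, Z t ω)) k)
    (n : ℕ) (hn : 1 ≤ n) :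
    ∀ ω : Ω,
      2 * (sSup {L : ℝ |
            ∃ Qθ : ((Fin k → A) × (Fin k → B) × (Fin k → C)) → A × B × C → ℝ,
              (∀ w s, 0 < Qθ w s) ∧ (∀ w, ∑ s : A × B × C, Qθ w s = 1) ∧
              L = ∑ i ∈ Finset.range n, Real.log
                (Qθ (winVal k (fun t => X t ω) (fun t => Y t ω) (fun t => Z t ω) i)
                  (ptVal (fun t => X t ω) (fun t => Y t ω) (fun t => Z t ω) i))} -
          sSup {L : ℝ |
            ∃ (Qxz : ((Fin k → A) × (Fin k → B) × (Fin k → C)) → A × C → ℝ)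
              (Qy : ((Fin k → B) × (Fin (k + 1) → C)) → B → ℝ),
              (∀ w s, 0 < Qxz w s) ∧ (∀ w, ∑ s : A × C, Qxz w s = 1) ∧
              (∀ w b, 0 < Qy w b) ∧ (∀ w, ∑ b : B, Qy w b = 1) ∧
              L = ∑ i ∈ Finset.range n,
                (Real.log (Qxz (winVal k (fun t => X t ω) (fun t => Y t ω) (fun t => Z t ω) i)
                    (X ((i : ℤ) + 1) ω, Z ((i : ℤ) + 1) ω)) +
                 Real.log (Qy (pzVal k (fun t => Y t ω) (fun t => Z t ω) i)
                    (Y ((i : ℤ) + 1) ω)))}) =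
        2 * (n : ℝ) * plugInP k n X Y Z ω := by
  classical
  intro ω
  have hn0 : 0 < n := hn
  set xs : ℤ → A := fun t => X t ω with hxs
  set ys : ℤ → B := fun t => Y t ω with hys
  set zs : ℤ → C := fun t => Z t ω with hzs
  set f0 : Fin n → ((Fin k → A) × (Fin k → B) × (Fin k → C)) × (A × B × C) :=
    fun i => (winVal k xs ys zs i, ptVal xs ys zs i) with hf0
  set f1 : Fin n → ((Fin k → A) × (Fin k → B) × (Fin k → C)) × (A × C) :=
    fun i => (winVal k xs ys zs i, (xs ((i : ℤ) + 1), zs ((i : ℤ) + 1))) with hf1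
  set f2 : Fin n → ((Fin k → B) × (Fin (k + 1) → C)) × B :=
    fun i => (pzVal k ys zs i, ys ((i : ℤ) + 1)) with hf2
  set Fm : Fin n → (Fin (k + 1) → A) × (Fin (k + 1) → B) × (Fin (k + 1) → C) :=
    fun i => fullVal k xs ys zs i with hFm
  set Gm : Fin n → (Fin (k + 1) → A) × (Fin k → B) × (Fin (k + 1) → C) :=
    fun i => xpzVal k xs ys zs i with hGm
  set PZm : Fin n → (Fin k → B) × (Fin (k + 1) → C) := fun i => pzVal k ys zs i with hPZm
  set Ym : Fin n → B := fun i => ys ((i : ℤ) + 1) with hYm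
  set XBm : Fin n → (Fin (k + 1) → A) :=
    fun i j => xs ((i : ℤ) + 1 - (k : ℤ) + (j : ℕ)) with hXBm
  -- the two sSup computations
  have e0 : sSup {L : ℝ |
        ∃ Qθ : ((Fin k → A) × (Fin k → B) × (Fin k → C)) → A × B × C → ℝ,
          (∀ w s, 0 < Qθ w s) ∧ (∀ w, ∑ s : A × B × C, Qθ w s = 1) ∧
          L = ∑ i ∈ Finset.range n, Real.log
            (Qθ (winVal k xs ys zs i) (ptVal xs ys zs i))}
      = llv f0 := by
    rw [← sSup_loglik hn0 f0]
    congr 1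
    ext L
    constructor
    · rintro ⟨Q, h1, h2, rfl⟩
      exact ⟨Q, h1, h2, (Fin.sum_univ_eq_sum_range
        (fun i => Real.log (Q (winVal k xs ys zs i) (ptVal xs ys zs i))) n).symm⟩
    · rintro ⟨Q, h1, h2, rfl⟩
      exact ⟨Q, h1, h2, (Fin.sum_univ_eq_sum_range
        (fun i => Real.log (Q (winVal k xs ys zs i) (ptVal xs ys zs i))) n)⟩
  have e1 : sSup {L : ℝ |
        ∃ (Qxz : ((Fin k → A) × (Fin k → B) × (Fin k → C)) → A × C → ℝ)
          (Qy : ((Fin k → B) × (Fin (k + 1) → C)) → B → ℝ),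
          (∀ w s, 0 < Qxz w s) ∧ (∀ w, ∑ s : A × C, Qxz w s = 1) ∧
          (∀ w b, 0 < Qy w b) ∧ (∀ w, ∑ b : B, Qy w b = 1) ∧
          L = ∑ i ∈ Finset.range n,
            (Real.log (Qxz (winVal k xs ys zs i)
                (X ((i : ℤ) + 1) ω, Z ((i : ℤ) + 1) ω)) +
             Real.log (Qy (pzVal k ys zs i)
                (Y ((i : ℤ) + 1) ω)))}
      = llv f1 + llv f2 := by
    rw [← sSup_loglik_pair hn0 f1 f2]
    congr 1
    ext L
    constructor
    · rintro ⟨Q1, Q2, h1, h2, h3, h4, rfl⟩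
      exact ⟨Q1, Q2, h1, h2, h3, h4, (Fin.sum_univ_eq_sum_range
        (fun i => Real.log (Q1 (winVal k xs ys zs i)
            (X ((i : ℤ) + 1) ω, Z ((i : ℤ) + 1) ω)) +
          Real.log (Q2 (pzVal k ys zs i) (Y ((i : ℤ) + 1) ω))) n).symm⟩
    · rintro ⟨Q1, Q2, h1, h2, h3, h4, rfl⟩
      exact ⟨Q1, Q2, h1, h2, h3, h4, (Fin.sum_univ_eq_sum_range
        (fun i => Real.log (Q1 (winVal k xs ys zs i)
            (X ((i : ℤ) + 1) ω, Z ((i : ℤ) + 1) ω)) +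
          Real.log (Q2 (pzVal k ys zs i) (Y ((i : ℤ) + 1) ω))) n)⟩
  -- entropy identifications
  have hv0 : llv f0 = (n : ℝ) * entH (empμ n) (fun i => (f0 i).1)
      - (n : ℝ) * entH (empμ n) f0 := llv_eq_entropies hn0 f0
  have hv1 : llv f1 = (n : ℝ) * entH (empμ n) (fun i => (f0 i).1)
      - (n : ℝ) * entH (empμ n) f1 := llv_eq_entropies hn0 f1
  have hv2 : llv f2 = (n : ℝ) * entH (empμ n) PZm
      - (n : ℝ) * entH (empμ n) f2 := llv_eq_entropies hn0 f2
  have hE0 : entH (empμ n) f0 = entH (empμ n) Fm := by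
    have hc : f0 = fun i => gWinPt k (Fm i) := by
      funext i
      show (winVal k xs ys zs ↑i, ptVal xs ys zs ↑i) = gWinPt k (fullVal k xs ys zs ↑i)
      simp only [winVal, ptVal, fullVal, gWinPt, splitBlk, Prod.mk.injEq]
      refine ⟨⟨?_, ?_, ?_⟩, ?_, ?_, ?_⟩ <;>
        first
          | (funext j; congr 1)
          | (congr 1; simp only [Fin.val_last]; try ring)
    rw [hc]
    exact entH_comp_inj _ Fm _ (gWinPt_inj k)
  have hE1 : entH (empμ n) f1 = entH (empμ n) Gm := by
    have hc : f1 = fun i => gWinXZ k (Gm i) := by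
      funext i
      show (winVal k xs ys zs ↑i, (xs ((i : ℤ) + 1), zs ((i : ℤ) + 1)))
        = gWinXZ k (xpzVal k xs ys zs ↑i)
      simp only [winVal, xpzVal, gWinXZ, splitBlk, Prod.mk.injEq]
      refine ⟨⟨?_, ?_, ?_⟩, ?_, ?_⟩ <;>
        first
          | rfl
          | (funext j; congr 1)
          | (congr 1; simp only [Fin.val_last]; try ring)
    rw [hc]
    exact entH_comp_inj _ Gm _ (gWinXZ_inj k)
  have hE2 : entH (empμ n) f2 = entH (empμ n) (fun i => (Ym i, PZm i)) := by
    have hc : f2 = fun i => Prod.swap ((fun j : Fin n => (Ym j, PZm j)) i) := rfl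
    rw [hc]
    exact entH_comp_inj _ (fun i => (Ym i, PZm i)) _ Prod.swap_injective
  have hE3 : entH (empμ n) (fun i => (XBm i, PZm i)) = entH (empμ n) Gm := rfl
  have hE4 : entH (empμ n) (fun i => ((Ym i, XBm i), PZm i)) = entH (empμ n) Fm := by
    have hc : (fun i : Fin n => ((Ym i, XBm i), PZm i)) = fun i => gYX k (Fm i) := by
      funext i
      show ((Ym i, XBm i), PZm i) = gYX k (fullVal k xs ys zs ↑i)
      simp only [hYm, hXBm, hPZm, pzVal, fullVal, gYX, splitBlk, Prod.mk.injEq]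
      refine ⟨⟨?_, ?_⟩, ?_, ?_⟩ <;>
        first
          | rfl
          | (funext j; congr 1)
          | (congr 1; simp only [Fin.val_last]; try ring)
    rw [hc]
    exact entH_comp_inj _ Fm _ (gYX_inj k)
  have hplug : plugInP k n X Y Z ω = cmi (empμ n) Ym XBm PZm := rfl
  rw [e0, e1, hv0, hv1, hv2, hE0, hE1, hE2, hplug]
  simp only [cmi, condH, hE3, hE4]
  have hPf2 : entH (empμ n) (fun i => (f2 i).1) = entH (empμ n) PZm := rfl
  ring


end CCDI
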